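/- arXiv:0907.2713 — 4 statements merged into one kernel-verified Lean document; each statement's English description precedes it below -/
import Mathlib

section
/- In the setting of a parent four-momentum (E, p) decaying to a visible daughter (E_v, p_v) and an invisible daughter (E_i, p_i) (so E = E_v + E_i, p = p_v + p_i, each four-momentum causal), suppose in addition both daughters have well-defined equal rapidities: E_v > |p_{v,z}|, E_i > |p_{i,z}|, and ½ ln((E_v + p_{v,z})/(E_v − p_{v,z})) = ½ ln((E_i + p_{i,z})/(E_i − p_{i,z})), where p_z denotes the third momentum component. Then the transverse mass equals the parent mass: m_T(m_v, vT, m_i, qT) = √(E² − |p|²), where m_v, m_i are the invariant masses and vT, qT the transverse momenta of the two daughters. -/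
/-!
Since `m² + |p_T|² = E² − p_z²`, a daughter's transverse energy is `e = √(E² − p_z²)`. Expanding the squares, `m_T² − m² = 2 (e_v e_i − (E_v E_i − p_{v,z} p_{i,z}))`,
and `e_v e_i ≥ E_v E_i − p_{v,z} p_{i,z}` with equality exactly when `p_{v,z} / E_v = p_{i,z} / E_i`,
i.e. when the two longitudinal velocities, equivalently the two rapidities, agree.
-/

open scoped RealInnerProductSpace

/-- Transverse energy `e(m,p) = √(m² + |p|²)`. -/
noncomputable def transverseEnergy (m : ℝ) (p : EuclideanSpace ℝ (Fin 2)) : ℝ :=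
  Real.sqrt (m ^ 2 + ‖p‖ ^ 2)

/-- Transverse mass `m_T(m_v, vT, m_i, qT)`. -/
noncomputable def transverseMass (mv : ℝ) (vT : EuclideanSpace ℝ (Fin 2))
    (mi : ℝ) (qT : EuclideanSpace ℝ (Fin 2)) : ℝ :=
  Real.sqrt (mv ^ 2 + mi ^ 2 +
    2 * (transverseEnergy mv vT * transverseEnergy mi qT - ⟪vT, qT⟫))

/-- Projection of a 3-momentum onto the transverse plane (first two coordinates). -/
noncomputable def projT (p : EuclideanSpace ℝ (Fin 3)) : EuclideanSpace ℝ (Fin 2) :=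
  WithLp.toLp 2 (fun i : Fin 2 => p i.castSucc)

/-- Invariant mass `√(E² − |p|²)` of a 3+1 four-momentum `(E, p)`. -/
noncomputable def invariantMass (E : ℝ) (p : EuclideanSpace ℝ (Fin 3)) : ℝ :=
  Real.sqrt (E ^ 2 - ‖p‖ ^ 2)

noncomputable def rapidity (E pz : ℝ) : ℝ :=
  (1 / 2) * Real.log ((E + pz) / (E - pz))

theorem mul_eq_mul_of_rapidity_eq {Ev pvz Ei piz : ℝ} (hv : |pvz| < Ev) (hi : |piz| < Ei)
    (h : rapidity Ev pvz = rapidity Ei piz) : Ei * pvz = Ev * piz := by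
  obtain ⟨hv₁, hv₂⟩ := abs_lt.mp hv
  obtain ⟨hi₁, hi₂⟩ := abs_lt.mp hi
  have hv₃ : 0 < Ev - pvz := by linarith
  have hi₃ : 0 < Ei - piz := by linarith
  have hdiv : (Ev + pvz) / (Ev - pvz) = (Ei + piz) / (Ei - piz) :=
    Real.log_injOn_pos (div_pos (by linarith) hv₃) (div_pos (by linarith) hi₃)
      (by unfold rapidity at h; linarith)
  rw [div_eq_div_iff hv₃.ne' hi₃.ne'] at hdiv
  linarith

theorem inner_eq_inner_projT_add (x y : EuclideanSpace ℝ (Fin 3)) :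
    ⟪x, y⟫ = ⟪projT x, projT y⟫ + x 2 * y 2 := by
  simp only [projT, PiLp.inner_apply, Fin.sum_univ_three, Fin.sum_univ_two, RCLike.inner_apply,
    conj_trivial, Fin.castSucc_zero, Fin.castSucc_one]
  ring

theorem norm_sq_eq_norm_projT_sq_add (x : EuclideanSpace ℝ (Fin 3)) :
    ‖x‖ ^ 2 = ‖projT x‖ ^ 2 + x 2 ^ 2 := by
  rw [← real_inner_self_eq_norm_sq, ← real_inner_self_eq_norm_sq, inner_eq_inner_projT_add, sq]

theorem invariantMass_sq {E : ℝ} {p : EuclideanSpace ℝ (Fin 3)} (h : ‖p‖ ≤ E) :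
    invariantMass E p ^ 2 = E ^ 2 - ‖p‖ ^ 2 :=
  Real.sq_sqrt (sub_nonneg.mpr (pow_le_pow_left₀ (norm_nonneg p) h 2))

theorem transverseEnergy_invariantMass {E : ℝ} {p : EuclideanSpace ℝ (Fin 3)} (h : ‖p‖ ≤ E) :
    transverseEnergy (invariantMass E p) (projT p) = √(E ^ 2 - p 2 ^ 2) := by
  rw [transverseEnergy, invariantMass_sq h, norm_sq_eq_norm_projT_sq_add]
  ring_nf

/-- Equality case of `√(x² − a²) √(y² − b²) ≥ x y − a b`, the reverse Cauchy–Schwarz inequality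
in 1+1 Minkowski space. -/
theorem sqrt_sq_sub_mul_sqrt_sq_sub_of_mul_eq {x a y b : ℝ} (ha : |a| ≤ x) (hb : |b| ≤ y)
    (h : y * a = x * b) : √(x ^ 2 - a ^ 2) * √(y ^ 2 - b ^ 2) = x * y - a * b := by
  have hab : a * b ≤ x * y :=
    (le_abs_self _).trans (abs_mul a b ▸ mul_le_mul ha hb (abs_nonneg b) ((abs_nonneg a).trans ha))
  have hsq : (x ^ 2 - a ^ 2) * (y ^ 2 - b ^ 2) = (x * y - a * b) ^ 2 := by
    linear_combination (x * b - y * a) * h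
  rw [← Real.sqrt_mul (sub_nonneg.mpr (sq_le_sq' (abs_le.mp ha).1 (abs_le.mp ha).2)), hsq,
    Real.sqrt_sq (sub_nonneg.mpr hab)]

theorem transverseMass_eq_invariantMass_add {Ev Ei : ℝ} {pv pi : EuclideanSpace ℝ (Fin 3)}
    (hv : ‖pv‖ ≤ Ev) (hi : ‖pi‖ ≤ Ei) (h : Ei * pv 2 = Ev * pi 2) :
    transverseMass (invariantMass Ev pv) (projT pv) (invariantMass Ei pi) (projT pi) =
      invariantMass (Ev + Ei) (pv + pi) := by
  have hvz : |pv 2| ≤ Ev := (PiLp.norm_apply_le pv 2).trans hv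
  have hiz : |pi 2| ≤ Ei := (PiLp.norm_apply_le pi 2).trans hi
  rw [transverseMass, transverseEnergy_invariantMass hv, transverseEnergy_invariantMass hi,
    sqrt_sq_sub_mul_sqrt_sq_sub_of_mul_eq hvz hiz h, invariantMass_sq hv, invariantMass_sq hi,
    invariantMass, ← real_inner_self_eq_norm_sq, ← real_inner_self_eq_norm_sq,
    ← real_inner_self_eq_norm_sq (pv + pi), inner_add_left, inner_add_right, inner_add_right,
    real_inner_comm pv pi, inner_eq_inner_projT_add pv pi]
  ring_nf

theorem transverseMass_eq_parent_mass_of_equal_rapidity_general (E Ev Ei : ℝ)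
    (p pv pinv : EuclideanSpace ℝ (Fin 3))
    (hE : E = Ev + Ei) (hp : p = pv + pinv)
    (hv : ‖pv‖ ≤ Ev) (hi : ‖pinv‖ ≤ Ei)
    (hvz : |pv 2| < Ev) (hiz : |pinv 2| < Ei)
    (hrap : (1 / 2) * Real.log ((Ev + pv 2) / (Ev - pv 2)) =
            (1 / 2) * Real.log ((Ei + pinv 2) / (Ei - pinv 2))) :
    transverseMass (invariantMass Ev pv) (projT pv)
      (invariantMass Ei pinv) (projT pinv) = invariantMass E p := by
  subst hE hp
  exact transverseMass_eq_invariantMass_add hv hi (mul_eq_mul_of_rapidity_eq hvz hiz hrap)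

/-- if in addition the two daughters have well-defined and equal
rapidities, the transverse mass equals the parent mass. -/
theorem transverseMass_eq_parent_mass_of_equal_rapidity (E Ev Ei : ℝ)
    (p pv pinv : EuclideanSpace ℝ (Fin 3))
    (hE : E = Ev + Ei) (hp : p = pv + pinv) (hEp : ‖p‖ ≤ E)
    (hv : ‖pv‖ ≤ Ev) (hi : ‖pinv‖ ≤ Ei)
    (hvz : |pv 2| < Ev) (hiz : |pinv 2| < Ei)
    (hrap : (1 / 2) * Real.log ((Ev + pv 2) / (Ev - pv 2)) =
            (1 / 2) * Real.log ((Ei + pinv 2) / (Ei - pinv 2))) :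
    transverseMass (invariantMass Ev pv) (projT pv)
      (invariantMass Ei pinv) (projT pinv) = invariantMass E p :=
  transverseMass_eq_parent_mass_of_equal_rapidity_general E Ev Ei p pv pinv hE hp hv hi hvz hiz hrap
end

section
/- For every pTmiss ∈ ℝ² and every choice of visible systems and hypothesized invisible masses, mT2(v₁, v₂, pTmiss, m_i⁽¹⁾, m_i⁽²⁾) ≥ m_< = max(m_v⁽¹⁾ + m_i⁽¹⁾, m_v⁽²⁾ + m_i⁽²⁾). Moreover, the infimum of mT2(v₁, v₂, pTmiss, m_i⁽¹⁾, m_i⁽²⁾) over all pTmiss ∈ ℝ² equals m_<. -/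
/-!
By Cauchy–Schwarz for `(mv, ‖vT‖)` and `(mi, ‖qT‖)` together with `⟪vT, qT⟫ ≤ ‖vT‖ ‖qT‖`,
every transverse mass is at least `mv + mi`, whence `m_< ≤ mT2` for every `pTmiss`.
Conversely `m_T` is monotone in `mv ≥ 0` and equals `mv' + mi` at `qT = (mi / mv') • vT`; taking
`mv' = mv + δ` on each side and `pTmiss = qT⁽¹⁾ + qT⁽²⁾` gives `mT2 ≤ m_< + δ`.
-/

open scoped RealInnerProductSpace

/-- `mT2(v₁, v₂, pTmiss, m_i⁽¹⁾, m_i⁽²⁾)`: the infimum over all partitions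
`qT⁽¹⁾ + qT⁽²⁾ = pTmiss` of the larger of the two transverse masses. -/
noncomputable def mT2 (mv1 : ℝ) (vT1 : EuclideanSpace ℝ (Fin 2))
    (mv2 : ℝ) (vT2 : EuclideanSpace ℝ (Fin 2))
    (ptmiss : EuclideanSpace ℝ (Fin 2)) (mi1 mi2 : ℝ) : ℝ :=
  sInf {r : ℝ | ∃ q1 q2 : EuclideanSpace ℝ (Fin 2), q1 + q2 = ptmiss ∧
    r = max (transverseMass mv1 vT1 mi1 q1) (transverseMass mv2 vT2 mi2 q2)}

section TransverseMass

variable (v q : EuclideanSpace ℝ (Fin 2))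

theorem transverseEnergy_nonneg (m : ℝ) : 0 ≤ transverseEnergy m v := Real.sqrt_nonneg _

theorem transverseEnergy_sq (m : ℝ) : transverseEnergy m v ^ 2 = m ^ 2 + ‖v‖ ^ 2 :=
  Real.sq_sqrt (by positivity)

theorem transverseEnergy_mono {m m' : ℝ} (hm : 0 ≤ m) (hmm' : m ≤ m') :
    transverseEnergy m v ≤ transverseEnergy m' v :=
  Real.sqrt_le_sqrt (by nlinarith)

theorem mul_add_norm_mul_norm_le_transverseEnergy_mul (mv mi : ℝ) :
    mv * mi + ‖v‖ * ‖q‖ ≤ transverseEnergy mv v * transverseEnergy mi q := by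
  rw [transverseEnergy, transverseEnergy, ← Real.sqrt_mul (by positivity)]
  apply Real.le_sqrt_of_sq_le
  nlinarith [sq_nonneg (mv * ‖q‖ - mi * ‖v‖)]

theorem add_le_transverseMass (mv mi : ℝ) :
    mv + mi ≤ transverseMass mv v mi q := by
  apply Real.le_sqrt_of_sq_le
  nlinarith [mul_add_norm_mul_norm_le_transverseEnergy_mul v q mv mi, real_inner_le_norm v q]

theorem transverseMass_mono_left {mv mv' : ℝ} (hmv : 0 ≤ mv) (hmvmv' : mv ≤ mv') (mi : ℝ) :
    transverseMass mv v mi q ≤ transverseMass mv' v mi q := by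
  have := mul_le_mul_of_nonneg_right (transverseEnergy_mono v hmv hmvmv')
    (transverseEnergy_nonneg q mi)
  exact Real.sqrt_le_sqrt (by nlinarith)

theorem transverseMass_mul_smul_self {mv t : ℝ} (hmv : 0 ≤ mv) (ht : 0 ≤ t) :
    transverseMass mv v (t * mv) (t • v) = mv + t * mv := by
  have hE : transverseEnergy (t * mv) (t • v) = t * transverseEnergy mv v := by
    rw [transverseEnergy, transverseEnergy, norm_smul, Real.norm_of_nonneg ht,
      ← Real.sqrt_sq ht, ← Real.sqrt_mul (sq_nonneg t), Real.sqrt_sq ht]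
    ring_nf
  rw [transverseMass, hE, real_inner_smul_right, real_inner_self_eq_norm_sq]
  rw [← Real.sqrt_sq (by positivity : 0 ≤ mv + t * mv)]
  congr 1
  linear_combination 2 * t * transverseEnergy_sq v mv

theorem exists_transverseMass_le {mv mi δ : ℝ} (hmv : 0 ≤ mv) (hmi : 0 ≤ mi) (hδ : 0 < δ) :
    ∃ q, transverseMass mv v mi q ≤ mv + mi + δ := by
  have hmvδ : 0 < mv + δ := by positivity
  set t := mi / (mv + δ)
  have hmi_eq : mi = t * (mv + δ) := (div_mul_cancel₀ mi hmvδ.ne').symm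
  refine ⟨t • v, ?_⟩
  calc transverseMass mv v mi (t • v) ≤ transverseMass (mv + δ) v mi (t • v) :=
        transverseMass_mono_left _ _ hmv (by linarith) mi
    _ = mv + mi + δ := by
        rw [hmi_eq, transverseMass_mul_smul_self v hmvδ.le (by positivity)]; ring

end TransverseMass

section MT2

variable (mv1 mv2 mi1 mi2 : ℝ) (vT1 vT2 : EuclideanSpace ℝ (Fin 2))

theorem mT2_add_le (q1 q2 : EuclideanSpace ℝ (Fin 2)) :
    mT2 mv1 vT1 mv2 vT2 (q1 + q2) mi1 mi2 ≤
      max (transverseMass mv1 vT1 mi1 q1) (transverseMass mv2 vT2 mi2 q2) := by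
  refine csInf_le ⟨0, ?_⟩ ⟨q1, q2, rfl, rfl⟩
  rintro r ⟨p1, p2, -, rfl⟩
  exact le_max_of_le_left (Real.sqrt_nonneg _)

theorem max_add_le_mT2 (ptmiss : EuclideanSpace ℝ (Fin 2)) :
    max (mv1 + mi1) (mv2 + mi2) ≤ mT2 mv1 vT1 mv2 vT2 ptmiss mi1 mi2 := by
  refine le_csInf ⟨_, ptmiss, 0, add_zero _, rfl⟩ ?_
  rintro r ⟨q1, q2, -, rfl⟩
  exact max_le_max (add_le_transverseMass vT1 q1 mv1 mi1)
    (add_le_transverseMass vT2 q2 mv2 mi2)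

variable {mv1 mv2 mi1 mi2}

theorem exists_mT2_le (hmv1 : 0 ≤ mv1) (hmv2 : 0 ≤ mv2) (hmi1 : 0 ≤ mi1) (hmi2 : 0 ≤ mi2)
    {δ : ℝ} (hδ : 0 < δ) :
    ∃ ptmiss, mT2 mv1 vT1 mv2 vT2 ptmiss mi1 mi2 ≤ max (mv1 + mi1) (mv2 + mi2) + δ := by
  obtain ⟨q1, hq1⟩ := exists_transverseMass_le vT1 hmv1 hmi1 hδ
  obtain ⟨q2, hq2⟩ := exists_transverseMass_le vT2 hmv2 hmi2 hδ
  refine ⟨q1 + q2, (mT2_add_le _ _ _ _ _ _ q1 q2).trans ?_⟩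
  rw [← max_add_add_right]
  exact max_le_max hq1 hq2

end MT2

/-- `mT2 ≥ m_< = max(m_v⁽¹⁾ + m_i⁽¹⁾, m_v⁽²⁾ + m_i⁽²⁾)` for every
`pTmiss`, and the infimum of `mT2` over `pTmiss` equals `m_<`. -/
theorem mT2_ge_and_iInf_eq (mv1 mv2 mi1 mi2 : ℝ)
    (hmv1 : 0 ≤ mv1) (hmv2 : 0 ≤ mv2) (hmi1 : 0 ≤ mi1) (hmi2 : 0 ≤ mi2)
    (vT1 vT2 : EuclideanSpace ℝ (Fin 2)) :
    (∀ ptmiss : EuclideanSpace ℝ (Fin 2),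
      max (mv1 + mi1) (mv2 + mi2) ≤ mT2 mv1 vT1 mv2 vT2 ptmiss mi1 mi2) ∧
    (⨅ ptmiss : EuclideanSpace ℝ (Fin 2), mT2 mv1 vT1 mv2 vT2 ptmiss mi1 mi2) =
      max (mv1 + mi1) (mv2 + mi2) := by
  have hge := max_add_le_mT2 mv1 mv2 mi1 mi2 vT1 vT2
  refine ⟨hge, le_antisymm (le_of_forall_pos_le_add fun δ hδ => ?_) (le_ciInf hge)⟩
  obtain ⟨ptmiss, hp⟩ := exists_mT2_le vT1 vT2 hmv1 hmv2 hmi1 hmi2 hδ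
  exact (ciInf_le ⟨_, Set.forall_mem_range.2 hge⟩ ptmiss).trans hp
end

section
/- (Lemma 5) Suppose both hypothesized invisible masses are zero (m_i⁽¹⁾ = m_i⁽²⁾ = 0), visible system 1 is massless (m_v⁽¹⁾ = 0), and pTmiss is parallel to vT⁽¹⁾ in the sense that pTmiss = λ·vT⁽¹⁾ for some λ ≥ 0. Then mT2(v₁, v₂, pTmiss, 0, 0) = m_< = m_v⁽²⁾. -/
open scoped RealInnerProductSpace

lemma transverseEnergy_zero (q : EuclideanSpace ℝ (Fin 2)) :
    transverseEnergy 0 q = ‖q‖ := by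
  simp [transverseEnergy, Real.sqrt_sq (norm_nonneg q)]

lemma mv_le_transverseMass (mv : ℝ) (hmv : 0 ≤ mv) (vT q : EuclideanSpace ℝ (Fin 2)) :
    mv ≤ transverseMass mv vT 0 q := by
  have h1 : ⟪vT, q⟫ ≤ ‖vT‖ * ‖q‖ := real_inner_le_norm vT q
  have h2 : ‖vT‖ ≤ transverseEnergy mv vT := by
    have h := Real.sqrt_le_sqrt (show ‖vT‖ ^ 2 ≤ mv ^ 2 + ‖vT‖ ^ 2 by nlinarith)
    rwa [Real.sqrt_sq (norm_nonneg _)] at h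
  have h3 : ‖vT‖ * ‖q‖ ≤ transverseEnergy mv vT * ‖q‖ :=
    mul_le_mul_of_nonneg_right h2 (norm_nonneg q)
  calc mv = Real.sqrt (mv ^ 2) := (Real.sqrt_sq hmv).symm
    _ ≤ transverseMass mv vT 0 q := by
        rw [transverseMass, transverseEnergy_zero]
        apply Real.sqrt_le_sqrt; nlinarith

/-- Lemma 5: when `m_i⁽¹⁾ = m_i⁽²⁾ = 0`, `m_v⁽¹⁾ = 0` and
`pTmiss = λ • vT⁽¹⁾` for some `λ ≥ 0`, then `mT2 = m_< = m_v⁽²⁾`. -/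
theorem mT2_eq_of_ptmiss_parallel (mv2 : ℝ) (hmv2 : 0 ≤ mv2)
    (vT1 vT2 : EuclideanSpace ℝ (Fin 2)) (lam : ℝ) (hlam : 0 ≤ lam) :
    mT2 0 vT1 mv2 vT2 (lam • vT1) 0 0 = mv2 := by
  have hT1 : transverseMass 0 vT1 0 (lam • vT1) = 0 := by
    rw [transverseMass, transverseEnergy_zero, transverseEnergy_zero,
      norm_smul, real_inner_smul_right, real_inner_self_eq_norm_sq,
      Real.norm_eq_abs, abs_of_nonneg hlam]
    ring_nf
    simp [Real.sqrt_eq_zero']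
  have hT2 : transverseMass mv2 vT2 0 0 = mv2 := by
    rw [transverseMass, transverseEnergy_zero]
    simp [Real.sqrt_sq hmv2]
  have hmem : mv2 ∈ {r : ℝ | ∃ q1 q2 : EuclideanSpace ℝ (Fin 2), q1 + q2 = lam • vT1 ∧
      r = max (transverseMass 0 vT1 0 q1) (transverseMass mv2 vT2 0 q2)} := by
    exact ⟨lam • vT1, 0, by simp, by rw [hT1, hT2, max_eq_right hmv2]⟩
  have hbdd : ∀ r ∈ {r : ℝ | ∃ q1 q2 : EuclideanSpace ℝ (Fin 2), q1 + q2 = lam • vT1 ∧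
      r = max (transverseMass 0 vT1 0 q1) (transverseMass mv2 vT2 0 q2)}, mv2 ≤ r := by
    rintro r ⟨q1, q2, -, rfl⟩
    exact le_trans (mv_le_transverseMass mv2 hmv2 vT2 q2) (le_max_right _ _)
  exact le_antisymm (csInf_le ⟨mv2, hbdd⟩ hmem) (le_csInf ⟨mv2, hmem⟩ hbdd)
end

section
/- Let the visible system of a transverse-mass computation be composite: let c₁, …, c_K be future-directed causal 2+1 vectors with sum v = (e, pT), and define the composite mass m_v = √(e² − |pT|²) and transverse momentum pT. For a subset S ⊆ {1, …, K} with sum v' = (e', pT'), define m_v' = √(e'² − |pT'|²). Then for every hypothesized invisible mass m_i ≥ 0 and every qT ∈ ℝ², m_T(m_v', pT', m_i, qT) ≤ m_T(m_v, pT, m_i, qT); i.e. the transverse mass cannot be increased by omitting one or more visible constituents. -/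
open scoped RealInnerProductSpace

lemma causal_sum (K : ℕ) (c : Fin K → ℝ × EuclideanSpace ℝ (Fin 2))
    (hc : ∀ k, ‖(c k).2‖ ≤ (c k).1) (T : Finset (Fin K)) :
    ‖(∑ k ∈ T, c k).2‖ ≤ (∑ k ∈ T, c k).1 := by
  rw [Prod.snd_sum, Prod.fst_sum]
  calc ‖∑ k ∈ T, (c k).2‖ ≤ ∑ k ∈ T, ‖(c k).2‖ := norm_sum_le _ _
    _ ≤ ∑ k ∈ T, (c k).1 := Finset.sum_le_sum fun k _ => hc k

/-- the transverse mass cannot be increased by omitting one or more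
constituents of a composite visible system. -/
theorem transverseMass_subset_le (K : ℕ) (c : Fin K → ℝ × EuclideanSpace ℝ (Fin 2))
    (hc : ∀ k, ‖(c k).2‖ ≤ (c k).1) (S : Finset (Fin K))
    (mi : ℝ) (hmi : 0 ≤ mi) (qT : EuclideanSpace ℝ (Fin 2)) :
    transverseMass (Real.sqrt ((∑ k ∈ S, c k).1 ^ 2 - ‖(∑ k ∈ S, c k).2‖ ^ 2))
        (∑ k ∈ S, c k).2 mi qT ≤
      transverseMass (Real.sqrt ((∑ k, c k).1 ^ 2 - ‖(∑ k, c k).2‖ ^ 2))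
        (∑ k, c k).2 mi qT := by
  set a := ∑ k ∈ S, c k with ha_def
  set b := ∑ k ∈ Sᶜ, c k with hb_def
  have hsum : ∑ k, c k = a + b := (Finset.sum_add_sum_compl S c).symm
  have ha : ‖a.2‖ ≤ a.1 := causal_sum K c hc S
  have hb : ‖b.2‖ ≤ b.1 := causal_sum K c hc Sᶜ
  have ha2 : (0:ℝ) ≤ ‖a.2‖ := norm_nonneg _
  have hb2 : (0:ℝ) ≤ ‖b.2‖ := norm_nonneg _
  have ha1 : 0 ≤ a.1 := le_trans ha2 ha
  have hb1 : 0 ≤ b.1 := le_trans hb2 hb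
  -- transverse energy of a causal system equals its energy
  have key : ∀ v : ℝ × EuclideanSpace ℝ (Fin 2), ‖v.2‖ ≤ v.1 →
      transverseEnergy (Real.sqrt (v.1 ^ 2 - ‖v.2‖ ^ 2)) v.2 = v.1 ∧
      Real.sqrt (v.1 ^ 2 - ‖v.2‖ ^ 2) ^ 2 = v.1 ^ 2 - ‖v.2‖ ^ 2 := by
    intro v hv
    have h0 : (0:ℝ) ≤ v.1 := le_trans (norm_nonneg _) hv
    have hnn : 0 ≤ v.1 ^ 2 - ‖v.2‖ ^ 2 := by nlinarith [norm_nonneg v.2]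
    have hsq : Real.sqrt (v.1 ^ 2 - ‖v.2‖ ^ 2) ^ 2 = v.1 ^ 2 - ‖v.2‖ ^ 2 :=
      Real.sq_sqrt hnn
    refine ⟨?_, hsq⟩
    rw [transverseEnergy, hsq]
    rw [show v.1 ^ 2 - ‖v.2‖ ^ 2 + ‖v.2‖ ^ 2 = v.1 ^ 2 by ring]
    exact Real.sqrt_sq h0
  obtain ⟨hEa, hsa⟩ := key a ha
  obtain ⟨hEab, hsab⟩ := key (a + b) (by rw [← hsum]; exact causal_sum K c hc Finset.univ)
  have hei : ‖qT‖ ≤ transverseEnergy mi qT := by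
    rw [transverseEnergy]
    have h := Real.sqrt_le_sqrt (show ‖qT‖ ^ 2 ≤ mi ^ 2 + ‖qT‖ ^ 2 by nlinarith)
    rwa [Real.sqrt_sq (norm_nonneg _)] at h
  have heinn : 0 ≤ transverseEnergy mi qT := Real.sqrt_nonneg _
  rw [hsum]
  unfold transverseMass
  rw [hEa, hEab, hsa, hsab]
  apply Real.sqrt_le_sqrt
  have hab : (a+b).1 = a.1 + b.1 := rfl
  have hab2 : (a+b).2 = a.2 + b.2 := rfl
  rw [hab, hab2, inner_add_left]
  have h1 : ⟪a.2, b.2⟫ ≤ ‖a.2‖ * ‖b.2‖ := real_inner_le_norm _ _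
  have h2 : ⟪b.2, qT⟫ ≤ ‖b.2‖ * ‖qT‖ := real_inner_le_norm _ _
  have h3 : ‖a.2 + b.2‖ ≤ ‖a.2‖ + ‖b.2‖ := norm_add_le _ _
  have h4 : (0:ℝ) ≤ ‖a.2 + b.2‖ := norm_nonneg _
  have h5 : ‖b.2‖ * ‖qT‖ ≤ b.1 * transverseEnergy mi qT :=
    mul_le_mul hb hei (norm_nonneg _) hb1
  nlinarith [sq_nonneg (‖a.2‖ + ‖b.2‖)]
end
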